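/- arXiv:2007.04647 — 3 statements merged into one kernel-verified Lean document; each statement's English description precedes it below -/
import Mathlib

section
/- Let R be a commutative ring, let X and N be R-modules, and let u, v ∈ R. Suppose u and v both annihilate X, and u, v form a regular sequence on N (u is regular on N, and v is regular on N/uN). Then Ext¹_R(X, N) = 0. -/
/-!
Since `u` kills `X`, multiplication by `u` on a projective resolution `P → X` is null-homotopic,
so for every 1-cocycle `f : P₁ → N` the map `u • f` is a coboundary `g ∘ d`. Every `v • p` with
`p ∈ P₀` is a boundary, which puts `v • g` into `u • N`; regularity of `v` on `N ⧸ u • N` then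
gives `g = u • e`, and regularity of `u` on `N` gives `f = e ∘ d`.
-/

open CategoryTheory

namespace LinearMap

variable {R P Q N : Type*} [CommRing R] [AddCommGroup P] [Module R P] [AddCommGroup Q]
  [Module R Q] [AddCommGroup N] [Module R N]

theorem range_le_range_lsmul_of_comp_eq_smul {u v : R}
    (hv : Function.Injective fun y : N ⧸ range (lsmul R N u) => v • y)
    {d : Q →ₗ[R] P} (hd : ∀ p : P, v • p ∈ range d) {f : Q →ₗ[R] N} {g : P →ₗ[R] N}
    (hgf : g ∘ₗ d = u • f) : range g ≤ range (lsmul R N u) := by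
  rintro _ ⟨p, rfl⟩
  obtain ⟨q, hq⟩ := hd p
  have hvg : v • g p = u • f q := by
    rw [← map_smul, ← hq, ← comp_apply, hgf, smul_apply]
  rw [← Submodule.Quotient.mk_eq_zero]
  refine hv (a₂ := 0) ?_
  simp only [smul_zero, ← Submodule.Quotient.mk_smul, hvg, Submodule.Quotient.mk_eq_zero]
  exact ⟨f q, rfl⟩

theorem exists_smul_eq_of_range_le {u : R} (hu : Function.Injective fun n : N => u • n)
    {g : P →ₗ[R] N} (hg : range g ≤ range (lsmul R N u)) : ∃ e : P →ₗ[R] N, u • e = g := by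
  refine ⟨(LinearEquiv.ofInjective (lsmul R N u) hu).symm.toLinearMap ∘ₗ
    g.codRestrict _ fun p => hg (mem_range_self g p), ?_⟩
  ext p
  exact LinearEquiv.ofInjective_symm_apply (f := lsmul R N u) (h := hu) _

theorem exists_comp_eq_of_comp_eq_smul {u v : R} (hu : Function.Injective fun n : N => u • n)
    (hv : Function.Injective fun y : N ⧸ range (lsmul R N u) => v • y)
    {d : Q →ₗ[R] P} (hd : ∀ p : P, v • p ∈ range d) {f : Q →ₗ[R] N} {g : P →ₗ[R] N}
    (hgf : g ∘ₗ d = u • f) : ∃ e : P →ₗ[R] N, e ∘ₗ d = f := by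
  obtain ⟨e, rfl⟩ := exists_smul_eq_of_range_le hu (range_le_range_lsmul_of_comp_eq_smul hv hd hgf)
  refine ⟨e, ext fun q => hu ?_⟩
  simpa using congr($hgf q)

end LinearMap

namespace CategoryTheory.ProjectiveResolution

section Linear

variable {R C : Type*} [Ring R] [Category* C] [Abelian C] [Linear R C] {X : C}
  (P : ProjectiveResolution X)

theorem exists_smul_eq_d_comp {u : R} (hu : u • 𝟙 X = 0) {Y : C} (f : P.complex.X 1 ⟶ Y)
    (hf : P.complex.d 2 1 ≫ f = 0) : ∃ g : P.complex.X 0 ⟶ Y, u • f = P.complex.d 1 0 ≫ g := by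
  have hπ : (u • 𝟙 P.complex) ≫ P.π = 0 := by
    ext
    simp only [Linear.smul_comp, Category.id_comp, HomologicalComplex.smul_f_apply,
      HomologicalComplex.zero_f_apply]
    rw [← Category.comp_id (P.π.f 0), ← Linear.comp_smul]
    exact hu ▸ Limits.comp_zero
  let s : Homotopy (u • 𝟙 P.complex) 0 := liftHomotopyZero _ hπ
  refine ⟨s.hom 0 1 ≫ f, ?_⟩
  have hs := s.comm 1
  rw [dNext_eq s.hom (show (ComplexShape.down ℕ).Rel 1 0 by simp),
    prevD_eq s.hom (show (ComplexShape.down ℕ).Rel 2 1 by simp)] at hs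
  simp only [HomologicalComplex.zero_f_apply, add_zero, HomologicalComplex.smul_f_apply,
    HomologicalComplex.id_f] at hs
  rw [← Category.id_comp f, ← Linear.smul_comp, hs]
  simp [hf]

theorem isZero_ext_one_of_forall_exists_d_comp_eq [EnoughProjectives C] (Y : C)
    (h : ∀ f : P.complex.X 1 ⟶ Y, P.complex.d 2 1 ≫ f = 0 → ∃ e, P.complex.d 1 0 ≫ e = f) :
    Limits.IsZero (((Ext R C 1).obj (Opposite.op X)).obj Y) := by
  refine Limits.IsZero.of_iso ?_ (P.isoExt 1 Y)
  rw [← HomologicalComplex.exactAt_iff_isZero_homology,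
    HomologicalComplex.exactAt_iff' _ 0 1 2 (by simp) (by simp), ShortComplex.moduleCat_exact_iff]
  exact h

end Linear

theorem smul_mem_range_d_of_forall_smul_eq_zero {R : Type*} [Ring R] {X : ModuleCat R}
    (P : ProjectiveResolution X) {v : R} (hv : ∀ x : X, v • x = 0) (p : P.complex.X 0) :
    v • p ∈ LinearMap.range (P.complex.d 1 0).hom :=
  (ShortComplex.moduleCat_exact_iff _).mp P.exact₀ (v • p) (by rw [map_smul]; exact hv _)

end CategoryTheory.ProjectiveResolution

/-- Theorem 2.2(2): if `u, v` annihilate `X` and form a regular sequence on `N`,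
then `Ext¹_R(X, N) = 0`. -/
theorem ext_one_eq_zero_of_annihilates_of_regular_sequence
    {R : Type u} [CommRing R] (X N : Type u) [AddCommGroup X] [Module R X]
    [AddCommGroup N] [Module R N] (u v : R)
    (hu : ∀ x : X, u • x = 0) (hv : ∀ x : X, v • x = 0)
    (hreg₁ : Function.Injective fun n : N => u • n)
    (hreg₂ : Function.Injective
      fun y : N ⧸ LinearMap.range (LinearMap.lsmul R N u) => v • y) :
    Subsingleton (((Ext R (ModuleCat R) 1).obj
      (Opposite.op (ModuleCat.of R X))).obj (ModuleCat.of R N)) := by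
  let P := ProjectiveResolution.of (ModuleCat.of R X)
  have hu' : u • 𝟙 (ModuleCat.of R X) = 0 := by ext x; exact hu x
  refine ModuleCat.subsingleton_of_isZero (P.isZero_ext_one_of_forall_exists_d_comp_eq _ ?_)
  intro f hf
  obtain ⟨g, hg⟩ := P.exists_smul_eq_d_comp hu' f hf
  obtain ⟨e, he⟩ := LinearMap.exists_comp_eq_of_comp_eq_smul hreg₁ hreg₂
    (P.smul_mem_range_d_of_forall_smul_eq_zero hv) (congrArg ModuleCat.Hom.hom hg).symm
  exact ⟨ModuleCat.ofHom e, ModuleCat.hom_ext he⟩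
end

section
/- Let R be a commutative ring, let M and N be R-modules, let M₀ ⊆ M be a submodule, and let u, v ∈ R. Suppose u and v both annihilate the quotient M/M₀, and u, v form a regular sequence on N. Then the restriction map Hom_R(M, N) → Hom_R(M₀, N), sending f to its restriction to M₀, is an isomorphism. -/
/-!
Since `u • M ⊆ M₀`, a map `f : M → N` is determined by `u • f x = g (u • x)`; as `u` is
`N`-regular, the restriction map is injective, and `g` extends as soon as every `g (u • x)`
lies in `u • N`. That holds because `v • g (u • x) = g (u • v • x) = u • g (v • x)` and `v` is
regular on `N ⧸ u • N`.
-/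

open LinearMap

section

variable {R M N : Type*} [CommRing R] [AddCommGroup M] [Module R M] [AddCommGroup N] [Module R N]
  {M₀ : Submodule R M} {u v : R}

theorem Submodule.smul_mem_of_forall_smul_quotient_eq_zero
    (hu : ∀ x : M ⧸ M₀, u • x = 0) (x : M) : u • x ∈ M₀ := by
  rw [← Submodule.Quotient.mk_eq_zero, Submodule.Quotient.mk_smul]
  exact hu _

theorem domRestrict_injective_of_smul_mem (hu : IsSMulRegular N u) (huM : ∀ x : M, u • x ∈ M₀) :
    Function.Injective fun f : M →ₗ[R] N => f.domRestrict M₀ := by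
  intro f f' h
  ext x
  apply hu
  simp only [← map_smul]
  exact congr($h ⟨u • x, huM x⟩)

theorem mem_range_lsmul_of_smul_mem (hv : IsSMulRegular (N ⧸ range (lsmul R N u)) v) {n : N}
    (h : v • n ∈ range (lsmul R N u)) : n ∈ range (lsmul R N u) := by
  rw [← Submodule.Quotient.mk_eq_zero] at h ⊢
  exact hv (by simpa using h)

theorem apply_smul_mem_range_lsmul (hv : IsSMulRegular (N ⧸ range (lsmul R N u)) v)
    (huM : ∀ x : M, u • x ∈ M₀) (hvM : ∀ x : M, v • x ∈ M₀) (g : M₀ →ₗ[R] N) (x : M) :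
    g ⟨u • x, huM x⟩ ∈ range (lsmul R N u) := by
  refine mem_range_lsmul_of_smul_mem hv ⟨g ⟨v • x, hvM x⟩, ?_⟩
  rw [lsmul_apply, ← map_smul, ← map_smul]
  congr 1
  ext
  simp only [SetLike.val_smul, smul_smul, mul_comm]

/-- The extension is `x ↦ u⁻¹ • g (u • x)`, with `u⁻¹` the inverse of `u • · : N ≃ u • N`. -/
theorem exists_domRestrict_eq (hu : IsSMulRegular N u) (huM : ∀ x : M, u • x ∈ M₀)
    (g : M₀ →ₗ[R] N) (hg : ∀ x : M, g ⟨u • x, huM x⟩ ∈ range (lsmul R N u)) :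
    ∃ f : M →ₗ[R] N, f.domRestrict M₀ = g := by
  let e := LinearEquiv.ofInjective (lsmul R N u) hu
  let f : M →ₗ[R] N :=
    e.symm.toLinearMap ∘ₗ (g ∘ₗ (lsmul R M u).codRestrict M₀ huM).codRestrict _ hg
  have hf : ∀ x, u • f x = g ⟨u • x, huM x⟩ := fun x =>
    congrArg Subtype.val (e.apply_symm_apply ⟨g ⟨u • x, huM x⟩, hg x⟩)
  refine ⟨f, ext fun x => hu ?_⟩
  simp only [domRestrict_apply, hf, ← map_smul]
  rfl

end

/-- Theorem 2.2(3): if `u, v` annihilate `M/M₀` and form a regular sequence on `N`,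
then the restriction map `Hom_R(M, N) → Hom_R(M₀, N)` is an isomorphism. -/
theorem restriction_bijective_of_annihilates_of_regular_sequence
    {R M N : Type*} [CommRing R] [AddCommGroup M] [Module R M]
    [AddCommGroup N] [Module R N] (M₀ : Submodule R M) (u v : R)
    (hu : ∀ x : M ⧸ M₀, u • x = 0) (hv : ∀ x : M ⧸ M₀, v • x = 0)
    (hreg₁ : Function.Injective fun n : N => u • n)
    (hreg₂ : Function.Injective
      fun y : N ⧸ LinearMap.range (LinearMap.lsmul R N u) => v • y) :
    Function.Bijective fun f : M →ₗ[R] N => f.domRestrict M₀ := by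
  have huM := Submodule.smul_mem_of_forall_smul_quotient_eq_zero hu
  have hvM := Submodule.smul_mem_of_forall_smul_quotient_eq_zero hv
  exact ⟨domRestrict_injective_of_smul_mem hreg₁ huM, fun g =>
    exists_domRestrict_eq hreg₁ huM g (apply_smul_mem_range_lsmul hreg₂ huM hvM g)⟩
end

section
/- Let p be a prime, k a field of characteristic p, and G a cyclic group of order p with generator g. Consider the complex of kG-modules 0 → k → kG → kG → k → 0, where the first map sends 1 ∈ k to the norm element ∑_{i=0}^{p−1} g^i, the middle map is multiplication by (g − 1), and the last map is the augmentation sending every group element to 1. Then this complex is exact but not contractible. -/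
/-!
An element `x` of `k[G]` with `(g - 1) x = 0` is fixed by the generator, so its coefficients are
constant and `x` is a multiple of the norm element `N = ∑ h`. The kernel of the augmentation is
spanned by the elements `h - 1 = gⁱ - 1`, each divisible by `g - 1`.

A contracting homotopy would give a `G`-invariant functional `s` on `k[G]` with `s N = 1`.
Invariance forces `s N = |G| • s 1 = p • s 1 = 0` in characteristic `p`.
-/

open Finset Representation

lemma sum_range_card_pow_eq_sum_univ {G M : Type*} [Group G] [Fintype G] [AddCommMonoid M]
    {g : G} (hg : ∀ x, x ∈ Subgroup.zpowers g) (f : G → M) :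
    ∑ i ∈ range (Fintype.card G), f (g ^ i) = ∑ x, f x := by
  classical
  have hord : orderOf g = Fintype.card G := by
    rw [orderOf_eq_card_of_forall_mem_zpowers hg, Nat.card_eq_fintype_card]
  rw [← IsCyclic.image_range_orderOf hg, sum_image fun i hi j hj hij =>
    pow_injOn_Iio_orderOf (by simpa using hi) (by simpa using hj) hij, hord]

namespace MonoidAlgebra

variable {R G : Type*}

variable (R G) in
noncomputable def normElement [Semiring R] [Monoid G] [Fintype G] : MonoidAlgebra R G :=
  ∑ x : G, of R G x

section Semiring

variable [Semiring R] [Fintype G]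

@[simp]
lemma coeff_normElement [Monoid G] (x : G) : (normElement R G).coeff x = 1 := by
  classical
  simp [normElement, coeff_sum, Finsupp.single_apply]

lemma smul_normElement_injective [Monoid G] :
    Function.Injective fun c : R => c • normElement R G := fun a b hab => by
  simpa using congrArg (fun z : MonoidAlgebra R G => z.coeff 1) hab

lemma of_mul_normElement [Group G] (h : G) :
    of R G h * normElement R G = normElement R G := by
  simp only [normElement, mul_sum, ← map_mul]
  exact Fintype.sum_equiv (Equiv.mulLeft h) _ _ fun _ => rfl

lemma sum_range_card_of_pow_eq_normElement [Group G] {g : G}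
    (hg : ∀ x, x ∈ Subgroup.zpowers g) :
    ∑ i ∈ range (Fintype.card G), of R G (g ^ i) = normElement R G :=
  sum_range_card_pow_eq_sum_univ hg _

lemma map_normElement_of_invariant [Monoid G] {M : Type*} [AddCommMonoid M] [Module R M]
    (f : MonoidAlgebra R G →ₗ[R] M) (hf : ∀ h x, f (of R G h * x) = f x) :
    f (normElement R G) = Fintype.card G • f 1 := by
  simp only [normElement, map_sum]
  conv_lhs => enter [2, x]; rw [← mul_one (of R G x), hf]
  rw [sum_const, card_univ]

end Semiring

section CommSemiring

variable [CommSemiring R]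

lemma leftRegular_apply_eq_of_mul [Group G] (g : G) (x : MonoidAlgebra R G) :
    leftRegular R G g x = of R G g * x := by
  simp [← asAlgebraHom_ofMulAction_smul_eq_mul]

lemma lift_one_apply [Monoid G] (x : MonoidAlgebra R G) :
    lift R R G 1 x = x.coeff.linearCombination R fun _ => 1 := by
  simp [lift_apply, Finsupp.linearCombination_apply]

lemma lift_one_surjective [Monoid G] : Function.Surjective (lift R R G 1) :=
  fun c => ⟨single 1 c, by simp⟩

end CommSemiring

section CommRing

variable [CommRing R] [Group G]

lemma sub_one_mul_eq_zero_iff [Fintype G] {g : G} (hg : ∀ x, x ∈ Subgroup.zpowers g)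
    (x : MonoidAlgebra R G) :
    (of R G g - 1) * x = 0 ↔ ∃ c : R, x = c • normElement R G := by
  constructor
  · intro hx
    have hfix : leftRegular R G g x = x := by
      rw [leftRegular_apply_eq_of_mul, ← sub_eq_zero, ← hx, sub_mul, one_mul]
    refine ⟨x.coeff g, ?_⟩
    ext γ
    simp [coeff_of_leftRegular_of_generator g hg x hfix γ]
  · rintro ⟨c, rfl⟩
    rw [mul_smul_comm, sub_mul, of_mul_normElement, one_mul, sub_self, smul_zero]

lemma lift_one_eq_zero_iff [Finite G] {g : G} (hg : ∀ x, x ∈ Subgroup.zpowers g)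
    (x : MonoidAlgebra R G) :
    lift R R G 1 x = 0 ↔ ∃ y, x = (of R G g - 1) * y := by
  -- both sides describe the kernel of the projection of `k[G]` onto its coinvariants
  have hker := (FiniteCyclicGroup.coinvariantsKer_eq_range (leftRegular R G) g hg).symm.trans
    FiniteCyclicGroup.coinvariantsKer_leftRegular_eq_ker
  have hx := SetLike.ext_iff.1 hker x
  simp only [LinearMap.mem_range, LinearMap.mem_ker, LinearMap.comp_apply] at hx
  rw [lift_one_apply]
  refine hx.symm.trans ?_
  simp [leftRegular_apply_eq_of_mul, sub_mul, eq_comm]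

end CommRing

end MonoidAlgebra

open MonoidAlgebra

theorem periodicity_complex_exact_not_contractible_general
    {p : ℕ} (k : Type*) [Field k] [CharP k p]
    (G : Type*) [Group G] [Fintype G] (g : G)
    (hcard : Fintype.card G = p) (hgen : ∀ x : G, x ∈ Subgroup.zpowers g) :
    -- the complex is exact:
    (Function.Injective fun c : k =>
      c • ∑ i ∈ Finset.range p, MonoidAlgebra.of k G (g ^ i)) ∧
    (∀ x : MonoidAlgebra k G, (MonoidAlgebra.of k G g - 1) * x = 0 ↔
      ∃ c : k, x = c • ∑ i ∈ Finset.range p, MonoidAlgebra.of k G (g ^ i)) ∧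
    (∀ x : MonoidAlgebra k G, MonoidAlgebra.lift k k G 1 x = 0 ↔
      ∃ y : MonoidAlgebra k G, x = (MonoidAlgebra.of k G g - 1) * y) ∧
    Function.Surjective ⇑(MonoidAlgebra.lift k k G 1) ∧
    -- but it is not contractible:
    ¬ ∃ (s₁ : MonoidAlgebra k G →ₗ[k] k)
        (s₂ : MonoidAlgebra k G →ₗ[k] MonoidAlgebra k G)
        (s₃ : k →ₗ[k] MonoidAlgebra k G),
      (∀ (h : G) (x : MonoidAlgebra k G),
        s₁ (MonoidAlgebra.of k G h * x) = s₁ x) ∧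
      (∀ (h : G) (x : MonoidAlgebra k G),
        s₂ (MonoidAlgebra.of k G h * x) = MonoidAlgebra.of k G h * s₂ x) ∧
      (∀ (h : G) (c : k), MonoidAlgebra.of k G h * s₃ c = s₃ c) ∧
      (∀ c : k,
        s₁ (c • ∑ i ∈ Finset.range p, MonoidAlgebra.of k G (g ^ i)) = c) ∧
      (∀ x : MonoidAlgebra k G,
        s₁ x • (∑ i ∈ Finset.range p, MonoidAlgebra.of k G (g ^ i)) +
          s₂ ((MonoidAlgebra.of k G g - 1) * x) = x) ∧
      (∀ x : MonoidAlgebra k G,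
        (MonoidAlgebra.of k G g - 1) * s₂ x + s₃ (MonoidAlgebra.lift k k G 1 x) = x) ∧
      (∀ c : k, MonoidAlgebra.lift k k G 1 (s₃ c) = c) := by
  subst hcard
  simp only [sum_range_card_of_pow_eq_normElement hgen]
  refine ⟨smul_normElement_injective, sub_one_mul_eq_zero_iff hgen, lift_one_eq_zero_iff hgen,
    lift_one_surjective, ?_⟩
  rintro ⟨s₁, -, -, hs₁, -, -, hsplit, -, -, -⟩
  have hs₁N : s₁ (normElement k G) = 0 := by
    rw [map_normElement_of_invariant s₁ hs₁, nsmul_eq_mul, CharP.cast_eq_zero, zero_mul]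
  simpa [hs₁N] using hsplit 1

/-- The periodicity complex `0 → k → kG → kG → k → 0` for a cyclic group `G` of order
`p` with generator `g` (first map `1 ↦ ∑ gⁱ`, middle map multiplication by `g - 1`, last
map the augmentation) is exact but not contractible.

Exactness is spelled out degree by degree, and contractibility is spelled out as the
existence of a `kG`-linear contracting homotopy (`kG`-linearity of a `k`-linear map is
expressed as equivariance for left multiplication by group elements, the action on the
trivial module `k` being trivial). -/
theorem periodicity_complex_exact_not_contractible
    {p : ℕ} [Fact p.Prime] (k : Type*) [Field k] [CharP k p]
    (G : Type*) [Group G] [Fintype G] (g : G)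
    (hcard : Fintype.card G = p) (hgen : ∀ x : G, x ∈ Subgroup.zpowers g) :
    -- the complex is exact:
    (Function.Injective fun c : k =>
      c • ∑ i ∈ Finset.range p, MonoidAlgebra.of k G (g ^ i)) ∧
    (∀ x : MonoidAlgebra k G, (MonoidAlgebra.of k G g - 1) * x = 0 ↔
      ∃ c : k, x = c • ∑ i ∈ Finset.range p, MonoidAlgebra.of k G (g ^ i)) ∧
    (∀ x : MonoidAlgebra k G, MonoidAlgebra.lift k k G 1 x = 0 ↔
      ∃ y : MonoidAlgebra k G, x = (MonoidAlgebra.of k G g - 1) * y) ∧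
    Function.Surjective ⇑(MonoidAlgebra.lift k k G 1) ∧
    -- but it is not contractible:
    ¬ ∃ (s₁ : MonoidAlgebra k G →ₗ[k] k)
        (s₂ : MonoidAlgebra k G →ₗ[k] MonoidAlgebra k G)
        (s₃ : k →ₗ[k] MonoidAlgebra k G),
      (∀ (h : G) (x : MonoidAlgebra k G),
        s₁ (MonoidAlgebra.of k G h * x) = s₁ x) ∧
      (∀ (h : G) (x : MonoidAlgebra k G),
        s₂ (MonoidAlgebra.of k G h * x) = MonoidAlgebra.of k G h * s₂ x) ∧
      (∀ (h : G) (c : k), MonoidAlgebra.of k G h * s₃ c = s₃ c) ∧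
      (∀ c : k,
        s₁ (c • ∑ i ∈ Finset.range p, MonoidAlgebra.of k G (g ^ i)) = c) ∧
      (∀ x : MonoidAlgebra k G,
        s₁ x • (∑ i ∈ Finset.range p, MonoidAlgebra.of k G (g ^ i)) +
          s₂ ((MonoidAlgebra.of k G g - 1) * x) = x) ∧
      (∀ x : MonoidAlgebra k G,
        (MonoidAlgebra.of k G g - 1) * s₂ x + s₃ (MonoidAlgebra.lift k k G 1 x) = x) ∧
      (∀ c : k, MonoidAlgebra.lift k k G 1 (s₃ c) = c) :=
  periodicity_complex_exact_not_contractible_general k G g hcard hgen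
end
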